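/- arXiv:0912.4430 — 5 statements merged into one kernel-verified Lean document; each statement's English description precedes it below -/
import Mathlib

section
/- Let sd be a self-similar subdivision scheme on the simplex T_n such that no 1-dimensional face (edge) of any subsimplex of sd(T_n) coincides with an edge of T_n. Let d be the diameter of T_n and r the maximal diameter of the subsimplexes of sd(T_n). Then r < d, and the maximal diameter of subsimplexes of the m-th self-similar subdivision sd^m(T_n) is at most (r/d)^m · d, which tends to 0 as m → ∞. -/
/-!
Points of the standard simplex in `ℝⁿ` satisfy `‖p‖² ≤ ∑ pᵢ = 1` and `⟪p, q⟫ ≥ 0`, so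
`dist p q ^ 2 = ‖p‖² + ‖q‖² - 2⟪p, q⟫ ≤ 2`, with equality only if `‖p‖² = ‖q‖² = 1`, which
forces `p` and `q` to be vertices. Hence `d = √2`, and this value is attained only on the edges
of the simplex. The subsimplices of the first subdivision are finite sets, so their diameters are
attained by pairs of vertices; since none of these pairs spans an edge of the simplex, `r < d`.
The bound on the `m`-th subdivision then follows by induction from self-similarity.
-/

open Finset Metric

lemma Set.Finite.diam_lt_of_forall_dist_lt {α : Type*} [PseudoMetricSpace α] {s : Set α}
    (hs : s.Finite) {c : ℝ} (hc : 0 < c) (h : ∀ x ∈ s, ∀ y ∈ s, dist x y < c) : diam s < c := by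
  rcases s.eq_empty_or_nonempty with rfl | hne
  · simpa using hc
  obtain ⟨⟨x, y⟩, ⟨hx, hy⟩, hmax⟩ :=
    (hs.prod hs).isCompact.exists_isMaxOn (hne.prod hne) continuous_dist.continuousOn
  exact (diam_le_of_forall_dist_le dist_nonneg fun a ha b hb =>
    hmax (Set.mk_mem_prod ha hb)).trans_lt (h x hx y hy)

lemma le_pow_mul_of_exists_le_mul {α : Type*} (F : ℕ → Set α) (f : α → ℝ) {ρ c : ℝ}
    (hρ : 0 ≤ ρ) (h0 : ∀ x ∈ F 0, f x ≤ c)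
    (hstep : ∀ m, ∀ x ∈ F (m + 1), ∃ y ∈ F m, f x ≤ ρ * f y) :
    ∀ m, ∀ x ∈ F m, f x ≤ ρ ^ m * c
  | 0, x, hx => by simpa using h0 x hx
  | m + 1, x, hx => by
    obtain ⟨y, hy, hxy⟩ := hstep m x hx
    calc f x ≤ ρ * f y := hxy
      _ ≤ ρ * (ρ ^ m * c) :=
        mul_le_mul_of_nonneg_left (le_pow_mul_of_exists_le_mul F f hρ h0 hstep m y hy) hρ
      _ = ρ ^ (m + 1) * c := by ring

lemma dist_sq_eq_norm_sq_add_norm_sq_sub_inner {E : Type*} [NormedAddCommGroup E]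
    [InnerProductSpace ℝ E] (x y : E) :
    dist x y ^ 2 = ‖x‖ ^ 2 + ‖y‖ ^ 2 - 2 * inner ℝ x y := by
  rw [dist_eq_norm, norm_sub_sq_real]
  ring

def euclideanStdSimplex (ι : Type*) [Fintype ι] : Set (EuclideanSpace ℝ ι) :=
  {p | (∀ i, 0 ≤ p i) ∧ ∑ i, p i = 1}

section EuclideanStdSimplex

variable {ι : Type*} [Fintype ι] {p q : EuclideanSpace ℝ ι}

lemma single_mem_euclideanStdSimplex [DecidableEq ι] (a : ι) :
    EuclideanSpace.single a (1 : ℝ) ∈ euclideanStdSimplex ι := by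
  refine ⟨fun i => ?_, by simp⟩
  rw [PiLp.single_apply]
  split_ifs <;> norm_num

lemma le_one_of_mem_euclideanStdSimplex (hp : p ∈ euclideanStdSimplex ι) (i : ι) : p i ≤ 1 :=
  hp.2 ▸ single_le_sum (fun j _ => hp.1 j) (mem_univ i)

lemma sq_le_self_of_mem_euclideanStdSimplex (hp : p ∈ euclideanStdSimplex ι) (i : ι) :
    p i ^ 2 ≤ p i := by
  nlinarith [hp.1 i, le_one_of_mem_euclideanStdSimplex hp i]

lemma norm_sq_le_one_of_mem_euclideanStdSimplex (hp : p ∈ euclideanStdSimplex ι) :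
    ‖p‖ ^ 2 ≤ 1 := by
  rw [EuclideanSpace.real_norm_sq_eq, ← hp.2]
  exact sum_le_sum fun i _ => sq_le_self_of_mem_euclideanStdSimplex hp i

lemma inner_nonneg_of_mem_euclideanStdSimplex (hp : p ∈ euclideanStdSimplex ι)
    (hq : q ∈ euclideanStdSimplex ι) : 0 ≤ inner ℝ p q := by
  rw [PiLp.inner_apply]
  exact sum_nonneg fun i _ => mul_nonneg (hq.1 i) (hp.1 i)

lemma dist_sq_le_two_of_mem_euclideanStdSimplex (hp : p ∈ euclideanStdSimplex ι)
    (hq : q ∈ euclideanStdSimplex ι) : dist p q ^ 2 ≤ 2 := by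
  rw [dist_sq_eq_norm_sq_add_norm_sq_sub_inner]
  linarith [norm_sq_le_one_of_mem_euclideanStdSimplex hp,
    norm_sq_le_one_of_mem_euclideanStdSimplex hq, inner_nonneg_of_mem_euclideanStdSimplex hp hq]

lemma dist_le_sqrt_two_of_mem_euclideanStdSimplex (hp : p ∈ euclideanStdSimplex ι)
    (hq : q ∈ euclideanStdSimplex ι) : dist p q ≤ √2 :=
  (Real.le_sqrt dist_nonneg zero_le_two).2 (dist_sq_le_two_of_mem_euclideanStdSimplex hp hq)

lemma isBounded_euclideanStdSimplex : Bornology.IsBounded (euclideanStdSimplex ι) :=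
  isBounded_iff.2 ⟨√2, fun _ hp _ hq => dist_le_sqrt_two_of_mem_euclideanStdSimplex hp hq⟩

/-- Since `p i ^ 2 ≤ p i`, the equality `‖p‖² = ∑ p i` forces every coordinate into `{0, 1}`. -/
lemma exists_eq_single_of_norm_sq_eq_one [DecidableEq ι] (hp : p ∈ euclideanStdSimplex ι)
    (h : ‖p‖ ^ 2 = 1) : ∃ a, p = EuclideanSpace.single a 1 := by
  have hsq : ∀ i ∈ univ, p i ^ 2 = p i :=
    (sum_eq_sum_iff_of_le fun i _ => sq_le_self_of_mem_euclideanStdSimplex hp i).1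
      (by rw [← EuclideanSpace.real_norm_sq_eq, h, hp.2])
  obtain ⟨a, -, ha⟩ : ∃ a ∈ univ, p a ≠ 0 :=
    exists_ne_zero_of_sum_ne_zero (by rw [hp.2]; exact one_ne_zero)
  have hpa : p a = 1 := mul_left_cancel₀ ha (by rw [mul_one, ← sq, hsq a (mem_univ a)])
  have hrest : ∑ j ∈ univ.erase a, p j = 0 := by
    linarith [add_sum_erase univ (fun j => p j) (mem_univ a), hp.2]
  refine ⟨a, PiLp.ext fun i => ?_⟩
  rcases eq_or_ne i a with rfl | hia
  · simp [hpa]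
  · rw [sum_eq_zero_iff_of_nonneg fun j _ => hp.1 j] at hrest
    simp [hia, hrest i (mem_erase.2 ⟨hia, mem_univ i⟩)]

lemma exists_eq_single_of_dist_sq_eq_two [DecidableEq ι] (hp : p ∈ euclideanStdSimplex ι)
    (hq : q ∈ euclideanStdSimplex ι) (h : dist p q ^ 2 = 2) :
    ∃ a b, a ≠ b ∧ p = EuclideanSpace.single a 1 ∧ q = EuclideanSpace.single b 1 := by
  have hp1 := norm_sq_le_one_of_mem_euclideanStdSimplex hp
  have hq1 := norm_sq_le_one_of_mem_euclideanStdSimplex hq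
  have hpq := inner_nonneg_of_mem_euclideanStdSimplex hp hq
  have h' := dist_sq_eq_norm_sq_add_norm_sq_sub_inner p q ▸ h
  obtain ⟨a, rfl⟩ := exists_eq_single_of_norm_sq_eq_one hp (by linarith)
  obtain ⟨b, rfl⟩ := exists_eq_single_of_norm_sq_eq_one hq (by linarith)
  refine ⟨a, b, fun hab => ?_, rfl, rfl⟩
  subst hab
  simp at h

lemma dist_single_single_of_ne [DecidableEq ι] {a b : ι} (hab : a ≠ b) :
    dist (EuclideanSpace.single a (1 : ℝ)) (EuclideanSpace.single b 1) = √2 := by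
  have hon := EuclideanSpace.orthonormal_single (𝕜 := ℝ) (ι := ι)
  rw [← Real.sqrt_sq dist_nonneg, dist_sq_eq_norm_sq_add_norm_sq_sub_inner, hon.1 a, hon.1 b,
    hon.2 hab]
  norm_num

lemma diam_euclideanStdSimplex [Nontrivial ι] : diam (euclideanStdSimplex ι) = √2 := by
  classical
  obtain ⟨a, b, hab⟩ := exists_pair_ne ι
  refine le_antisymm (diam_le_of_forall_dist_le (Real.sqrt_nonneg 2)
    fun _ hp _ hq => dist_le_sqrt_two_of_mem_euclideanStdSimplex hp hq) ?_
  rw [← dist_single_single_of_ne hab]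
  exact dist_le_diam_of_mem isBounded_euclideanStdSimplex (single_mem_euclideanStdSimplex a)
    (single_mem_euclideanStdSimplex b)

lemma diam_lt_sqrt_two_of_forall_segment_ne [DecidableEq ι] {s : Set (EuclideanSpace ℝ ι)}
    (hs : s.Finite) (hsS : s ⊆ euclideanStdSimplex ι)
    (hedge : ∀ p ∈ s, ∀ q ∈ s, p ≠ q → ∀ a b : ι, a ≠ b →
      segment ℝ p q ≠ segment ℝ (EuclideanSpace.single a 1) (EuclideanSpace.single b 1)) :
    diam s < √2 := by
  refine hs.diam_lt_of_forall_dist_lt (by positivity) fun p hp q hq => ?_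
  rcases eq_or_ne p q with rfl | hpq
  · simp
  refine (dist_le_sqrt_two_of_mem_euclideanStdSimplex (hsS hp) (hsS hq)).lt_of_ne fun h => ?_
  obtain ⟨a, b, hab, rfl, rfl⟩ := exists_eq_single_of_dist_sq_eq_two (hsS hp) (hsS hq)
    (by rw [h, Real.sq_sqrt zero_le_two])
  exact hedge _ hp _ hq hpq a b hab rfl

end EuclideanStdSimplex

theorem stmt_6_general {n : ℕ} (hn : 2 ≤ n)
    (sdIter : ℕ → Finset (Finset (EuclideanSpace ℝ (Fin n))))
    (d r : ℝ)
    (hd : d = Metric.diam {p : EuclideanSpace ℝ (Fin n) | (∀ i, 0 ≤ p i) ∧ ∑ i, p i = 1})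
    (hT : ∀ σ ∈ sdIter 0, (σ : Set (EuclideanSpace ℝ (Fin n))) =
      Set.range (fun i : Fin n => EuclideanSpace.single i (1 : ℝ)))
    (hvert : ∀ σ ∈ sdIter 1, ∀ p ∈ σ, (∀ i, 0 ≤ p i) ∧ ∑ i, p i = 1)
    (hr : IsGreatest {x | ∃ σ ∈ sdIter 1, x = Metric.diam (σ : Set (EuclideanSpace ℝ (Fin n)))} r)
    (hedge : ∀ σ ∈ sdIter 1, ∀ p ∈ σ, ∀ q ∈ σ, p ≠ q → ∀ a b : Fin n, a ≠ b →
      segment ℝ p q ≠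
        segment ℝ (EuclideanSpace.single a (1 : ℝ)) (EuclideanSpace.single b (1 : ℝ)))
    (hself : ∀ m, ∀ σ ∈ sdIter (m + 1), ∃ τ ∈ sdIter m,
      Metric.diam (σ : Set (EuclideanSpace ℝ (Fin n))) ≤
        (r / d) * Metric.diam (τ : Set (EuclideanSpace ℝ (Fin n)))) :
    r < d ∧
      (∀ m, ∀ σ ∈ sdIter m,
        Metric.diam (σ : Set (EuclideanSpace ℝ (Fin n))) ≤ (r / d) ^ m * d) ∧
      Filter.Tendsto (fun m : ℕ => (r / d) ^ m * d) Filter.atTop (nhds 0) := by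
  have : Nontrivial (Fin n) := Fin.nontrivial_iff_two_le.2 hn
  have hd_eq : d = √2 := hd.trans diam_euclideanStdSimplex
  obtain ⟨σ, hσ, hrσ⟩ := hr.1
  have hrd : r < d := hrσ ▸ hd_eq ▸ diam_lt_sqrt_two_of_forall_segment_ne σ.finite_toSet
    (fun p hp => hvert σ hσ p hp) (hedge σ hσ)
  have hρ0 : 0 ≤ r / d := div_nonneg (hrσ ▸ diam_nonneg) (hd_eq ▸ Real.sqrt_nonneg 2)
  have hρ1 : r / d < 1 := (div_lt_one (hd_eq ▸ by positivity)).2 hrd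
  refine ⟨hrd, le_pow_mul_of_exists_le_mul
    (fun m => (sdIter m : Set (Finset (EuclideanSpace ℝ (Fin n)))))
    (fun σ => diam (σ : Set (EuclideanSpace ℝ (Fin n)))) hρ0 (fun τ hτ => ?_) hself, ?_⟩
  · rw [hT τ hτ, hd]
    exact diam_mono (Set.range_subset_iff.2 single_mem_euclideanStdSimplex)
      isBounded_euclideanStdSimplex
  · simpa using (tendsto_pow_atTop_nhds_zero_of_lt_one hρ0 hρ1).mul_const d

/-- If no edge of a subsimplex of the self-similar subdivision of the standard simplex
coincides with an edge of the simplex, then the maximal subsimplex diameter `r`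
satisfies `r < d`, the subsimplexes of the `m`-th subdivision have diameter at most
`(r/d)^m * d`, and this bound tends to `0`. -/
theorem stmt_6 {n : ℕ} (hn : 2 ≤ n)
    (sdIter : ℕ → Finset (Finset (EuclideanSpace ℝ (Fin n))))
    (d r : ℝ)
    (hd : d = Metric.diam {p : EuclideanSpace ℝ (Fin n) | (∀ i, 0 ≤ p i) ∧ ∑ i, p i = 1})
    (hT : ∀ σ ∈ sdIter 0, (σ : Set (EuclideanSpace ℝ (Fin n))) =
      Set.range (fun i : Fin n => EuclideanSpace.single i (1 : ℝ)))
    (hvert : ∀ σ ∈ sdIter 1, ∀ p ∈ σ, (∀ i, 0 ≤ p i) ∧ ∑ i, p i = 1)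
    (hne : (sdIter 1).Nonempty)
    (hr : IsGreatest {x | ∃ σ ∈ sdIter 1, x = Metric.diam (σ : Set (EuclideanSpace ℝ (Fin n)))} r)
    (hedge : ∀ σ ∈ sdIter 1, ∀ p ∈ σ, ∀ q ∈ σ, p ≠ q → ∀ a b : Fin n, a ≠ b →
      segment ℝ p q ≠
        segment ℝ (EuclideanSpace.single a (1 : ℝ)) (EuclideanSpace.single b (1 : ℝ)))
    (hself : ∀ m, ∀ σ ∈ sdIter (m + 1), ∃ τ ∈ sdIter m,
      Metric.diam (σ : Set (EuclideanSpace ℝ (Fin n))) ≤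
        (r / d) * Metric.diam (τ : Set (EuclideanSpace ℝ (Fin n)))) :
    r < d ∧
      (∀ m, ∀ σ ∈ sdIter m,
        Metric.diam (σ : Set (EuclideanSpace ℝ (Fin n))) ≤ (r / d) ^ m * d) ∧
      Filter.Tendsto (fun m : ℕ => (r / d) ^ m * d) Filter.atTop (nhds 0) :=
  stmt_6_general hn sdIter d r hd hT hvert hr hedge hself
end

section
/- Let F be a form of degree d in n variables that is strictly positive on the simplex T_n, hence F attains a minimum ε > 0 on T_n. Then there exists δ > 0 such that for any normalized substitution matrix U whose columns u_1, ..., u_n all lie in T_n and satisfy |u_i − u_1| < δ for all i, the form G(t) = F(U t) has all coefficients strictly positive. -/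
open MvPolynomial

section Aux

variable {n : ℕ}

private lemma coeff_mul_linear (q : MvPolynomial (Fin n) ℝ) (a : Fin n → ℝ) (α : Fin n →₀ ℕ) :
    coeff α (q * ∑ j, C (a j) * X j)
      = ∑ j, a j * (if j ∈ α.support then coeff (α - Finsupp.single j 1) q else 0) := by
  rw [Finset.mul_sum, coeff_sum]
  refine Finset.sum_congr rfl fun j _ => ?_
  rw [show q * (C (a j) * X j) = C (a j) * (q * X j) by ring, coeff_C_mul, coeff_mul_X']

private lemma cont_coeff (F : MvPolynomial (Fin n) ℝ) :
    ∀ α : Fin n →₀ ℕ, Continuous fun U : Fin n → Fin n → ℝ =>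
      coeff α (aeval (fun i => ∑ j, C (U i j) * X j) F) := by
  induction F using MvPolynomial.induction_on with
  | C a =>
      intro α
      simp only [aeval_C]
      exact continuous_const
  | add p q hp hq =>
      intro α
      simp only [map_add, coeff_add]
      exact (hp α).add (hq α)
  | mul_X p i hp =>
      intro α
      simp only [map_mul, aeval_X, coeff_mul_linear]
      refine continuous_finset_sum _ fun j _ =>
        Continuous.mul ((continuous_apply j).comp (continuous_apply i)) ?_
      by_cases h : j ∈ α.support
      · simpa [h] using hp (α - Finsupp.single j 1)
      · simp only [h, if_false, mul_zero]
        exact continuous_const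

private lemma finsupp_sum_eq (β : Fin n →₀ ℕ) :
    (β.sum fun _ e => e) = ∑ i, β i :=
  Finsupp.sum_fintype _ _ fun _ => rfl

private lemma aeval_equal_cols {d : ℕ} (F : MvPolynomial (Fin n) ℝ)
    (hF : F.IsHomogeneous d) (u : Fin n → ℝ) :
    aeval (fun i => ∑ j, C (u i) * X j) F
      = C (eval u F) * (∑ j, X j : MvPolynomial (Fin n) ℝ) ^ d := by
  have hφ : (fun i => ∑ j, C (u i) * X j : Fin n → MvPolynomial (Fin n) ℝ)
      = fun i => C (u i) * ∑ j, X j := by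
    funext i; rw [Finset.mul_sum]
  rw [hφ]
  conv_lhs => rw [F.as_sum]
  rw [map_sum, eval_eq, map_sum, Finset.sum_mul]
  refine Finset.sum_congr rfl fun β hβ => ?_
  have hdeg : (∑ i ∈ β.support, β i) = d := by
    by_contra h
    exact (mem_support_iff.mp hβ) (hF.coeff_eq_zero h)
  rw [aeval_monomial]
  simp only [mul_pow]
  rw [Finsupp.prod, Finset.prod_mul_distrib, Finset.prod_pow_eq_pow_sum, hdeg]
  simp only [algebraMap_eq, map_mul, map_prod, map_pow]
  ring

private lemma coeff_sum_X_pow_pos {d : ℕ} (α : Fin n →₀ ℕ)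
    (hα : (α.sum fun _ e => e) = d) :
    0 < coeff α ((∑ j, X j : MvPolynomial (Fin n) ℝ) ^ d) := by
  classical
  have key : ∀ k : Fin n → ℕ, (∏ j, (X j : MvPolynomial (Fin n) ℝ) ^ k j)
      = monomial (Finsupp.equivFunOnFinite.symm k) 1 := by
    intro k
    rw [← prod_X_pow_eq_monomial]
    refine (Finset.prod_subset (Finset.subset_univ _) ?_).symm
    intro x _ hx
    have hx0 : k x = 0 := by simpa using Finsupp.notMem_support_iff.mp hx
    rw [hx0, pow_zero]
  rw [Finset.sum_pow_eq_sum_piAntidiag, coeff_sum]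
  have hterm : ∀ k : Fin n → ℕ,
      coeff α ((Nat.multinomial Finset.univ k : MvPolynomial (Fin n) ℝ)
        * ∏ j, (X j : MvPolynomial (Fin n) ℝ) ^ k j)
      = (Nat.multinomial Finset.univ k : ℝ)
        * (if Finsupp.equivFunOnFinite.symm k = α then 1 else 0) := by
    intro k
    rw [key, ← map_natCast (C : ℝ →+* MvPolynomial (Fin n) ℝ), coeff_C_mul, coeff_monomial]
  refine Finset.sum_pos' (fun k _ => ?_) ⟨⇑α, ?_, ?_⟩
  · rw [hterm]
    positivity
  · rw [Finset.mem_piAntidiag]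
    exact ⟨by rw [← finsupp_sum_eq, hα], fun i _ => Finset.mem_univ i⟩
  · rw [hterm, Finsupp.equivFunOnFinite_symm_coe, if_pos rfl, mul_one]
    exact_mod_cast Nat.multinomial_pos _ _

end Aux

/-- If a form `F` is bounded below by `ε > 0` on the standard simplex, then for any
normalized substitution matrix whose columns lie in the simplex and are close enough
to each other, the substituted form has all (degree `d`) coefficients positive. -/
theorem stmt_10 {n d : ℕ} (hn : 0 < n) (F : MvPolynomial (Fin n) ℝ)
    (hF : F.IsHomogeneous d) (ε : ℝ) (hε : 0 < ε)
    (hmin : ∀ x : Fin n → ℝ, (∀ i, 0 ≤ x i) → ∑ i, x i = 1 → ε ≤ eval x F) :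
    ∃ δ > (0 : ℝ), ∀ U : Matrix (Fin n) (Fin n) ℝ,
      (∀ j, (∀ i, 0 ≤ U i j) ∧ ∑ i, U i j = 1) →
      (∀ j, dist (fun i => U i j) (fun i => U i ⟨0, hn⟩) < δ) →
      ∀ α : Fin n →₀ ℕ, (α.sum fun _ e => e) = d →
        0 < coeff α (aeval (fun i => ∑ j, C (U i j) * X j) F) := by
  classical
  set i0 : Fin n := ⟨0, hn⟩
  set A : Finset (Fin n →₀ ℕ) := (Finset.univ : Finset (Fin n)).finsuppAntidiag d with hA
  have hmemA : ∀ α : Fin n →₀ ℕ, (α.sum fun _ e => e) = d → α ∈ A := by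
    intro α hα
    rw [hA, Finset.mem_finsuppAntidiag]
    exact ⟨by rw [← finsupp_sum_eq, hα], Finset.subset_univ _⟩
  have hAne : A.Nonempty := ⟨Finsupp.single i0 d, hmemA _ (Finsupp.sum_single_index rfl)⟩
  set m : (Fin n →₀ ℕ) → ℝ := fun α => coeff α ((∑ j, X j : MvPolynomial (Fin n) ℝ) ^ d)
    with hm
  have hmpos : ∀ α ∈ A, 0 < m α := by
    intro α hαA
    rw [hA, Finset.mem_finsuppAntidiag] at hαA
    refine coeff_sum_X_pow_pos α ?_
    rw [finsupp_sum_eq]; exact hαA.1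
  set c : ℝ := A.inf' hAne fun α => ε * m α with hc
  have hcpos : 0 < c := by
    rw [hc, Finset.lt_inf'_iff]
    exact fun α hαA => mul_pos hε (hmpos α hαA)
  -- the coefficient functions, as a map into a finite product
  set Φ : (Fin n → Fin n → ℝ) → (A → ℝ) :=
    fun U α => coeff (α : Fin n →₀ ℕ) (aeval (fun i => ∑ j, C (U i j) * X j) F) with hΦ
  have hΦcont : Continuous Φ := continuous_pi fun α => cont_coeff F (α : Fin n →₀ ℕ)
  set K : Set (Fin n → Fin n → ℝ) :=
    Set.univ.pi fun _ => Set.univ.pi fun _ => Set.Icc (0 : ℝ) 1 with hK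
  have hKc : IsCompact K :=
    isCompact_univ_pi fun _ => isCompact_univ_pi fun _ => isCompact_Icc
  have hUC : UniformContinuousOn Φ K :=
    hKc.uniformContinuousOn_of_continuous hΦcont.continuousOn
  obtain ⟨δ, hδpos, hδ⟩ := (Metric.uniformContinuousOn_iff).mp hUC c hcpos
  refine ⟨δ, hδpos, ?_⟩
  intro U hU hdist α hα
  have hαA : α ∈ A := hmemA α hα
  have hentry : ∀ i j, U i j ∈ Set.Icc (0 : ℝ) 1 := by
    intro i j
    refine ⟨(hU j).1 i, ?_⟩
    calc U i j ≤ ∑ i', U i' j :=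
          Finset.single_le_sum (fun i' _ => (hU j).1 i') (Finset.mem_univ i)
      _ = 1 := (hU j).2
  set u : Fin n → ℝ := fun i => U i i0 with hu
  set V : Fin n → Fin n → ℝ := fun i _ => u i with hV
  have hUK : (fun i j => U i j) ∈ K := by
    intro i _; intro j _; exact hentry i j
  have hVK : V ∈ K := by
    intro i _; intro j _; exact hentry i i0
  have hUV : dist (fun i j => U i j) V < δ := by
    rw [dist_pi_lt_iff hδpos]
    intro i
    rw [dist_pi_lt_iff hδpos]
    intro j
    have := hdist j
    rw [dist_pi_lt_iff hδpos] at this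
    exact this i
  have hdistΦ : dist (Φ (fun i j => U i j)) (Φ V) < c := hδ _ hUK _ hVK hUV
  have hij : dist (Φ (fun i j => U i j) ⟨α, hαA⟩) (Φ V ⟨α, hαA⟩)
      ≤ dist (Φ (fun i j => U i j)) (Φ V) := dist_le_pi_dist _ _ _
  have habs : |Φ (fun i j => U i j) ⟨α, hαA⟩ - Φ V ⟨α, hαA⟩| < c := by
    rw [← Real.dist_eq]; exact lt_of_le_of_lt hij hdistΦ
  have hΦV : Φ V ⟨α, hαA⟩ = eval u F * m α := by
    rw [hΦ]
    simp only
    rw [show (fun i => ∑ j, C (V i j) * X j : Fin n → MvPolynomial (Fin n) ℝ)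
        = fun i => ∑ j, C (u i) * X j from rfl]
    rw [aeval_equal_cols F hF u, coeff_C_mul, hm]
  have husimplex : ε ≤ eval u F := hmin u (fun i => (hU i0).1 i) (hU i0).2
  have hcm : c ≤ ε * m α := Finset.inf'_le _ hαA
  have hΦVlb : ε * m α ≤ Φ V ⟨α, hαA⟩ := by
    rw [hΦV]
    exact mul_le_mul_of_nonneg_right husimplex (le_of_lt (hmpos α hαA))
  have : 0 < Φ (fun i j => U i j) ⟨α, hαA⟩ := by
    have h1 := abs_sub_lt_iff.mp habs
    linarith [h1.2]
  exact this
end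

section
/- Let F be a form that is positive definite on T_n and let L be a finite set of normalized substitution matrices whose associated simplex subdivision sequence is convergent (maximal subsimplex diameter tends to 0). Then there exists m such that for every choice A_1, ..., A_m ∈ L, the form F(A_1 A_2 ··· A_m · t) has only nonnegative coefficients (i.e., the successive substitution sequence is positively terminating). -/
/-!
Write `F(P t)` for the substitution of the linear forms `∑ j, P i j * t j` into `F`. The
coefficients of `F(P t)` depend continuously on `P`. If every column of `P` equals one point
`v` of the simplex, homogeneity gives `F(P t) = F(v) * (∑ j, t j) ^ d`, whose coefficients of
degree `d` are positive multinomial multiples of `F(v) > 0`. The matrices with constant columns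
in the simplex form a compact set, so some uniform neighbourhood of it still has positive
degree-`d` coefficients; a column-stochastic matrix whose columns are pairwise `ε`-close lies in
that neighbourhood. Convergence of the subdivision makes every long product such a matrix.
-/

open MvPolynomial Matrix

namespace MvPolynomial

variable {σ τ R : Type*}

noncomputable def linearSubst [CommSemiring R] [Fintype τ] (P : Matrix σ τ R) :
    MvPolynomial σ R →ₐ[R] MvPolynomial τ R :=
  aeval fun i => ∑ j, C (P i j) * X j

section CommSemiring

variable [CommSemiring R] {F : MvPolynomial σ R} {d : ℕ}

theorem IsHomogeneous.aeval_mul_right {S : Type*} [CommSemiring S] [Algebra R S]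
    (hF : F.IsHomogeneous d) (g : σ → S) (s : S) :
    MvPolynomial.aeval (fun i => g i * s) F = MvPolynomial.aeval g F * s ^ d := by
  conv_lhs => rw [F.as_sum]
  conv_rhs => rw [F.as_sum]
  simp only [map_sum, Finset.sum_mul, aeval_monomial]
  refine Finset.sum_congr rfl fun β hβ => ?_
  rw [Finsupp.prod, Finsupp.prod]
  simp only [mul_pow, Finset.prod_mul_distrib, Finset.prod_pow_eq_pow_sum, mul_assoc]
  rw [← hF.degree_eq_sum_deg_support hβ]

theorem IsHomogeneous.linearSubst [Fintype τ] (hF : F.IsHomogeneous d) (P : Matrix σ τ R) :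
    (MvPolynomial.linearSubst P F).IsHomogeneous d := by
  rw [← one_mul d]
  exact hF.aeval _ fun i => IsHomogeneous.sum _ _ 1 fun j _ => isHomogeneous_C_mul_X (P i j) j

theorem IsHomogeneous.linearSubst_replicateCol [Fintype τ] (hF : F.IsHomogeneous d)
    (v : σ → R) :
    MvPolynomial.linearSubst (replicateCol τ v) F = C (eval v F) * (∑ j, X j) ^ d := by
  have hsum : (fun i => ∑ j, C (replicateCol τ v i j) * X j) = fun i => C (v i) * ∑ j, X j := by
    simp [Finset.mul_sum]
  rw [MvPolynomial.linearSubst, hsum, hF.aeval_mul_right, aeval_def, eval, coe_eval₂Hom,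
    eval₂_comp_left]
  rfl

end CommSemiring

theorem coeff_sum_X_pow_pos [Fintype σ] [CommSemiring R] [PartialOrder R]
    [IsStrictOrderedRing R] {d : ℕ} {α : σ →₀ ℕ} (hα : α.degree = d) :
    0 < coeff α ((∑ i, X i : MvPolynomial σ R) ^ d) := by
  rw [coeff_sum_X_pow_of_fintype, if_pos (by rwa [Finsupp.degree_apply] at hα)]
  exact_mod_cast Nat.multinomial_pos _ _

theorem coeff_linearSubst_mul_X [CommSemiring R] [Fintype τ] [DecidableEq τ] (P : Matrix σ τ R)
    (F : MvPolynomial σ R) (i : σ) (α : τ →₀ ℕ) :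
    coeff α (linearSubst P (F * X i)) =
      ∑ j, P i j *
        if j ∈ α.support then coeff (α - Finsupp.single j 1) (linearSubst P F) else 0 := by
  rw [map_mul, linearSubst, aeval_X, Finset.mul_sum, coeff_sum, ← linearSubst]
  refine Finset.sum_congr rfl fun j _ => ?_
  rw [mul_left_comm, coeff_C_mul, coeff_mul_X']

theorem continuous_coeff_linearSubst [CommRing R] [TopologicalSpace R] [IsTopologicalRing R]
    [Fintype τ] (F : MvPolynomial σ R) (α : τ →₀ ℕ) :
    Continuous fun P : Matrix σ τ R => coeff α (linearSubst P F) := by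
  classical
  induction F using MvPolynomial.induction_on generalizing α with
  | C a => simpa only [linearSubst, aeval_C] using continuous_const
  | add p q hp hq =>
    simp only [map_add, coeff_add]
    exact (hp α).add (hq α)
  | mul_X p i hp =>
    simp only [coeff_linearSubst_mul_X]
    refine continuous_finsetSum _ fun j _ => ?_
    split_ifs
    · exact (continuous_id.matrix_elem i j).mul (hp _)
    · simpa only [mul_zero] using continuous_const

theorem isOpen_setOf_forall_coeff_linearSubst_pos [Fintype τ] (F : MvPolynomial σ ℝ) (d : ℕ) :
    IsOpen {P : Matrix σ τ ℝ |
      ∀ α : τ →₀ ℕ, α.degree = d → 0 < coeff α (linearSubst P F)} := by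
  simpa only [Set.ofPred_forall, Set.mem_ofPred_eq] using
    (Finsupp.finite_of_degree_eq d).isOpen_biInter
    fun α _ => isOpen_lt continuous_const (continuous_coeff_linearSubst F α)

section Stochastic

attribute [local instance] Matrix.normedAddCommGroup

theorem IsHomogeneous.exists_forall_coeff_linearSubst_nonneg [Fintype σ] [DecidableEq σ]
    [Nonempty σ] {F : MvPolynomial σ ℝ} {d : ℕ} (hF : F.IsHomogeneous d)
    (hpos : ∀ x ∈ stdSimplex ℝ σ, 0 < eval x F) :
    ∃ ε > 0, ∀ P ∈ colStochastic ℝ σ, (∀ j j', dist (fun i => P i j) (fun i => P i j') < ε) →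
      ∀ α, 0 ≤ coeff α (MvPolynomial.linearSubst P F) := by
  set U := {P : Matrix σ σ ℝ | ∀ α : σ →₀ ℕ, α.degree = d →
    0 < coeff α (MvPolynomial.linearSubst P F)}
  have hK : IsCompact (replicateCol σ '' stdSimplex ℝ σ) :=
    (isCompact_stdSimplex ℝ σ).image continuous_id.matrix_replicateCol
  have hKU : replicateCol σ '' stdSimplex ℝ σ ⊆ U := by
    rintro _ ⟨v, hv, rfl⟩ α hα
    rw [hF.linearSubst_replicateCol, coeff_C_mul]
    exact mul_pos (hpos v hv) (coeff_sum_X_pow_pos hα)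
  obtain ⟨δ, hδ, hδU⟩ :=
    hK.exists_thickening_subset_open (isOpen_setOf_forall_coeff_linearSubst_pos F d) hKU
  refine ⟨δ, hδ, fun P hP hclose α => ?_⟩
  obtain ⟨j₀⟩ := ‹Nonempty σ›
  rw [mem_colStochastic_iff_sum] at hP
  have hPU : P ∈ U := by
    refine hδU (Metric.mem_thickening_iff.2
      ⟨replicateCol σ fun i => P i j₀, ⟨_, ⟨fun i => hP.1 i j₀, hP.2 j₀⟩, rfl⟩, ?_⟩)
    rw [dist_eq_norm, Matrix.norm_lt_iff hδ]
    intro i j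
    exact (dist_le_pi_dist (fun i => P i j) (fun i => P i j₀) i).trans_lt (hclose j j₀)
  by_cases hα : α.degree = d
  · exact (hPU α hα).le
  · rw [(hF.linearSubst P).coeff_eq_zero hα]

end Stochastic

end MvPolynomial

/-- If `F` is positive definite on the standard simplex and the subdivision sequence
associated with the finite set `L` of normalized substitution matrices is convergent
(column diameters of products tend to `0` uniformly), then there is an `m` such that
every `m`-fold successive substitution makes `F` trivially positive. -/
theorem stmt_11 {n d : ℕ} (hn : 0 < n) (F : MvPolynomial (Fin n) ℝ)
    (hF : F.IsHomogeneous d)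
    (hpos : ∀ x : Fin n → ℝ, (∀ i, 0 ≤ x i) → ∑ i, x i = 1 → 0 < eval x F)
    (L : Finset (Matrix (Fin n) (Fin n) ℝ))
    (hnorm : ∀ A ∈ L, ∀ j, (∀ i, 0 ≤ A i j) ∧ ∑ i, A i j = 1)
    (hconv : ∀ ε > (0 : ℝ), ∃ M, ∀ m ≥ M, ∀ A : Fin m → Matrix (Fin n) (Fin n) ℝ,
      (∀ i, A i ∈ L) → ∀ j j' : Fin n,
        dist (fun i => (List.ofFn A).prod i j) (fun i => (List.ofFn A).prod i j') < ε) :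
    ∃ m, ∀ A : Fin m → Matrix (Fin n) (Fin n) ℝ, (∀ i, A i ∈ L) →
      ∀ α : Fin n →₀ ℕ,
        0 ≤ coeff α (aeval (fun i => ∑ j, C ((List.ofFn A).prod i j) * X j) F) := by
  have : Nonempty (Fin n) := ⟨⟨0, hn⟩⟩
  obtain ⟨ε, hε, hsmall⟩ :=
    hF.exists_forall_coeff_linearSubst_nonneg fun x hx => hpos x hx.1 hx.2
  obtain ⟨M, hM⟩ := hconv ε hε
  refine ⟨M, fun A hA => hsmall _ (Submonoid.list_prod_mem _ ?_) (hM M le_rfl A hA)⟩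
  simp only [List.mem_ofFn, forall_exists_index, forall_apply_eq_imp_iff]
  intro i
  exact mem_colStochastic_iff_sum.2
    ⟨fun k j => (hnorm _ (hA i) j).1 k, fun j => (hnorm _ (hA i) j).2⟩
end

section
/- Let F be a form that is indefinite on T_n (takes both positive and negative values on T_n) and let L be a finite set of normalized substitution matrices whose subdivision sequence is convergent. Then there exist m and matrices A_1, ..., A_m ∈ L such that G(t) = F(A_1···A_m t) satisfies G(1/n, ..., 1/n) < 0 (the sequence is negatively terminating). -/
open MvPolynomial

/-- If `F` is indefinite on the standard simplex and the subdivision sequence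
associated with the finite set `L` of normalized substitution matrices is convergent
and covers the simplex, then some successive substitution makes `F` trivially
negative (negative at the barycenter). -/
theorem stmt_12 {n d : ℕ} (hn : 0 < n) (F : MvPolynomial (Fin n) ℝ)
    (hF : F.IsHomogeneous d)
    (hFpos : ∃ x : Fin n → ℝ, (∀ i, 0 ≤ x i) ∧ ∑ i, x i = 1 ∧ 0 < eval x F)
    (hFneg : ∃ x : Fin n → ℝ, (∀ i, 0 ≤ x i) ∧ ∑ i, x i = 1 ∧ eval x F < 0)
    (L : Finset (Matrix (Fin n) (Fin n) ℝ))
    (hnorm : ∀ A ∈ L, ∀ j, (∀ i, 0 ≤ A i j) ∧ ∑ i, A i j = 1)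
    (hconv : ∀ ε > (0 : ℝ), ∃ M, ∀ m ≥ M, ∀ A : Fin m → Matrix (Fin n) (Fin n) ℝ,
      (∀ i, A i ∈ L) → ∀ j j' : Fin n,
        dist (fun i => (List.ofFn A).prod i j) (fun i => (List.ofFn A).prod i j') < ε)
    (hcover : ∀ m, ∀ x : Fin n → ℝ, (∀ i, 0 ≤ x i) → ∑ i, x i = 1 →
      ∃ A : Fin m → Matrix (Fin n) (Fin n) ℝ, (∀ i, A i ∈ L) ∧
        x ∈ convexHull ℝ (Set.range fun j : Fin n => fun i => (List.ofFn A).prod i j)) :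
    ∃ m, ∃ A : Fin m → Matrix (Fin n) (Fin n) ℝ, (∀ i, A i ∈ L) ∧
      eval (fun _ : Fin n => (1 : ℝ) / n)
        (aeval (fun i => ∑ j, C ((List.ofFn A).prod i j) * X j) F) < 0 := by
  obtain ⟨x₀, hx₀0, hx₀1, hx₀neg⟩ := hFneg
  have hcont : Continuous fun x : Fin n → ℝ => eval x F := MvPolynomial.continuous_eval F
  have hmem : {x : Fin n → ℝ | eval x F < 0} ∈ nhds x₀ :=
    (isOpen_lt hcont continuous_const).mem_nhds hx₀neg
  obtain ⟨ε, hε, hball⟩ := Metric.mem_nhds_iff.mp hmem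
  obtain ⟨M, hM⟩ := hconv (ε / 2) (by positivity)
  obtain ⟨A, hAL, hx₀mem⟩ := hcover M x₀ hx₀0 hx₀1
  set P := (List.ofFn A).prod with hP
  set c : Fin n → Fin n → ℝ := fun j i => P i j with hc
  have hpair : ∀ j j', dist (c j) (c j') ≤ ε / 2 := fun j j' => (hM M le_rfl A hAL j j').le
  have hdiam : Metric.diam (Set.range c) ≤ ε / 2 := by
    apply Metric.diam_le_of_forall_dist_le (by positivity)
    rintro x ⟨j, rfl⟩ y ⟨j', rfl⟩
    exact hpair j j'
  set b : Fin n → ℝ := fun i => ∑ j, P i j * (1 / n) with hb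
  have hbmem : b ∈ convexHull ℝ (Set.range c) := by
    have hbeq : b = ∑ j, ((1 : ℝ) / n) • c j := by
      funext i
      simp [hb, hc, mul_comm]
    rw [hbeq]
    refine (convex_convexHull ℝ _).sum_mem (fun j _ => by positivity) ?_
      (fun j _ => subset_convexHull ℝ _ ⟨j, rfl⟩)
    have : (n : ℝ) ≠ 0 := Nat.cast_ne_zero.mpr hn.ne'
    simp [Finset.sum_const, Finset.card_univ]
    field_simp
  have hbdd : Bornology.IsBounded (convexHull ℝ (Set.range c)) :=
    isBounded_convexHull.mpr (Set.finite_range c).isBounded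
  have hdist : dist b x₀ ≤ ε / 2 :=
    calc dist b x₀ ≤ Metric.diam (convexHull ℝ (Set.range c)) :=
          Metric.dist_le_diam_of_mem hbdd hbmem hx₀mem
      _ = Metric.diam (Set.range c) := convexHull_diam _
      _ ≤ ε / 2 := hdiam
  have hbneg : eval b F < 0 := hball (by
    simp only [Metric.mem_ball]
    exact lt_of_le_of_lt hdist (by linarith))
  refine ⟨M, A, hAL, ?_⟩
  have key : eval (fun _ : Fin n => (1 : ℝ) / n)
      (aeval (fun i => ∑ j, C (P i j) * X j) F) = eval b F := by
    rw [aeval_eq_bind₁]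
    show eval₂Hom (RingHom.id ℝ) _ (bind₁ _ F) = _
    rw [eval₂Hom_bind₁]
    have h2 : (fun i => (eval₂Hom (RingHom.id ℝ) fun _ : Fin n => (1 : ℝ) / n)
        (∑ j, C (P i j) * X j)) = b := by
      funext i
      simp [hb]
    rw [h2]
    rfl
  rw [key]
  exact hbneg
end

section
/- Let F(x1,x2,x3) = (x1 − x2 + x3)^2 + x2^2 and let A be the 3×3 matrix with rows (1,0,1/3), (0,1,1/3), (0,0,1/3). Then for every m ≥ 1, F(A^m·(x1,x2,x3)^T) = x1^2 − 2 x1 x2 + (2/3^m) x1 x3 + 2 x2^2 + (1 − 3^{1−m}) x2 x3 + (1/4)(5/3^{2m} − 2/3^m + 1) x3^2. In particular the coefficient of x1 x2 equals −2 for all m, so F(A^m X) is never trivially positive. -/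
/-!
The matrices `N q = subdivMatrix q` satisfy `N q * N r = N (q * r)`, and `A = N (1/3)`, so
`A^m = N (3^{-m})`. Substituting `N q` into `F` gives `(x₁ - x₂ + q x₃)² + (x₂ + (1 - q)/2 · x₃)²`, whose `x₁x₂` coefficient is `-2` whatever `q` is.
-/

open MvPolynomial

def subdivMatrix {K : Type*} [Field K] (q : K) : Matrix (Fin 3) (Fin 3) K :=
  !![1, 0, (1 - q) / 2; 0, 1, (1 - q) / 2; 0, 0, q]

section
variable {K : Type*} [Field K]

theorem subdivMatrix_one : subdivMatrix (1 : K) = 1 := by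
  rw [subdivMatrix, Matrix.one_fin_three]; norm_num

theorem subdivMatrix_mul (q r : K) : subdivMatrix q * subdivMatrix r = subdivMatrix (q * r) := by
  ext i j
  fin_cases i <;> fin_cases j <;> simp [subdivMatrix, Matrix.mul_apply, Fin.sum_univ_three] <;> ring

theorem subdivMatrix_pow (q : K) (m : ℕ) : subdivMatrix q ^ m = subdivMatrix (q ^ m) := by
  induction m with
  | zero => rw [pow_zero, pow_zero, subdivMatrix_one]
  | succ n ih => rw [pow_succ, ih, subdivMatrix_mul, pow_succ]

theorem aeval_subdivMatrix [NeZero (2 : K)] (q : K) :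
    aeval (fun i => ∑ j, C (subdivMatrix q i j) * X j)
        ((X 0 - X 1 + X 2) ^ 2 + X 1 ^ 2 : MvPolynomial (Fin 3) K) =
      X 0 ^ 2 - 2 * X 0 * X 1 + C (2 * q) * (X 0 * X 2) + 2 * X 1 ^ 2
        + C (1 - 3 * q) * (X 1 * X 2) + C ((5 * q ^ 2 - 2 * q + 1) / 4) * X 2 ^ 2 := by
  have h₁ : 1 - 3 * q = 2 * ((1 - q) / 2) - 2 * q := by field_simp; ring
  have h₂ : (5 * q ^ 2 - 2 * q + 1) / 4 = ((1 - q) / 2) ^ 2 + q ^ 2 := by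
    rw [show (4 : K) = 2 ^ 2 by norm_num]; field_simp; ring
  rw [h₁, h₂]
  simp [subdivMatrix, Fin.sum_univ_three, map_ofNat C]
  ring

end

theorem coeff_X₀X₁ {R : Type*} [CommRing R] (a b c : R) :
    coeff (Finsupp.single (0 : Fin 3) 1 + Finsupp.single 1 1)
      (X 0 ^ 2 - 2 * X 0 * X 1 + C a * (X 0 * X 2) + 2 * X 1 ^ 2
        + C b * (X 1 * X 2) + C c * X 2 ^ 2 : MvPolynomial (Fin 3) R) = -2 := by
  simp [← map_ofNat C, X, C_mul_monomial, monomial_mul, monomial_pow, coeff_monomial,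
    Finsupp.ext_iff, Fin.forall_fin_succ]

theorem aeval_subdivMatrix_one_third_pow (m : ℕ) :
    aeval (fun i => ∑ j, C ((subdivMatrix (1 / 3 : ℝ) ^ m) i j) * X j)
        ((X 0 - X 1 + X 2) ^ 2 + X 1 ^ 2 : MvPolynomial (Fin 3) ℝ) =
      X 0 ^ 2 - 2 * X 0 * X 1 + C (2 / 3 ^ m) * (X 0 * X 2) + 2 * X 1 ^ 2
        + C (1 - 3 / 3 ^ m) * (X 1 * X 2)
        + C ((1 / 4) * (5 / 3 ^ (2 * m) - 2 / 3 ^ m + 1)) * X 2 ^ 2 := by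
  have hc : (5 * ((1 / 3) ^ m) ^ 2 - 2 * (1 / 3) ^ m + 1) / 4
      = (1 / 4 : ℝ) * (5 / 3 ^ (2 * m) - 2 / 3 ^ m + 1) := by
    rw [one_div_pow, pow_mul']; field_simp
  rw [subdivMatrix_pow, aeval_subdivMatrix, hc, one_div_pow, mul_one_div, mul_one_div]

theorem stmt_15_general (m : ℕ) :
    (aeval (fun i => ∑ j, C ((!![(1:ℝ), 0, 1/3; 0, 1, 1/3; 0, 0, 1/3] ^ m) i j) * X j)
        ((X 0 - X 1 + X 2) ^ 2 + (X 1) ^ 2 : MvPolynomial (Fin 3) ℝ)) =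
      (X 0) ^ 2 - 2 * X 0 * X 1 + C (2 / 3 ^ m) * (X 0 * X 2) + 2 * (X 1) ^ 2
        + C (1 - 3 / 3 ^ m) * (X 1 * X 2)
        + C ((1/4) * (5 / 3 ^ (2 * m) - 2 / 3 ^ m + 1)) * (X 2) ^ 2 ∧
      coeff (Finsupp.single (0 : Fin 3) 1 + Finsupp.single 1 1)
        (aeval (fun i => ∑ j, C ((!![(1:ℝ), 0, 1/3; 0, 1, 1/3; 0, 0, 1/3] ^ m) i j) * X j)
          ((X 0 - X 1 + X 2) ^ 2 + (X 1) ^ 2 : MvPolynomial (Fin 3) ℝ)) = -2 ∧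
      ¬ (∀ α : Fin 3 →₀ ℕ, 0 ≤ coeff α
          (aeval (fun i => ∑ j, C ((!![(1:ℝ), 0, 1/3; 0, 1, 1/3; 0, 0, 1/3] ^ m) i j) * X j)
            ((X 0 - X 1 + X 2) ^ 2 + (X 1) ^ 2 : MvPolynomial (Fin 3) ℝ))) := by
  have hA : !![(1:ℝ), 0, 1/3; 0, 1, 1/3; 0, 0, 1/3] = subdivMatrix (1 / 3) := by
    rw [subdivMatrix]; norm_num
  have hF := aeval_subdivMatrix_one_third_pow m
  rw [← hA] at hF
  have hcoeff := hF ▸ coeff_X₀X₁ _ _ _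
  exact ⟨hF, hcoeff, fun hpos => by linarith [hpos (Finsupp.single 0 1 + Finsupp.single 1 1)]⟩

/-- Substituting `A^m` (with `A` the matrix with rows `(1,0,1/3)`, `(0,1,1/3)`,
`(0,0,1/3)`) into `F = (x₁ - x₂ + x₃)² + x₂²` yields the displayed form; in
particular the coefficient of `x₁x₂` is `-2` for all `m`, so the result is never
trivially positive. -/
theorem stmt_15 (m : ℕ) (hm : 1 ≤ m) :
    (aeval (fun i => ∑ j, C ((!![(1:ℝ), 0, 1/3; 0, 1, 1/3; 0, 0, 1/3] ^ m) i j) * X j)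
        ((X 0 - X 1 + X 2) ^ 2 + (X 1) ^ 2 : MvPolynomial (Fin 3) ℝ)) =
      (X 0) ^ 2 - 2 * X 0 * X 1 + C (2 / 3 ^ m) * (X 0 * X 2) + 2 * (X 1) ^ 2
        + C (1 - 3 / 3 ^ m) * (X 1 * X 2)
        + C ((1/4) * (5 / 3 ^ (2 * m) - 2 / 3 ^ m + 1)) * (X 2) ^ 2 ∧
      coeff (Finsupp.single (0 : Fin 3) 1 + Finsupp.single 1 1)
        (aeval (fun i => ∑ j, C ((!![(1:ℝ), 0, 1/3; 0, 1, 1/3; 0, 0, 1/3] ^ m) i j) * X j)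
          ((X 0 - X 1 + X 2) ^ 2 + (X 1) ^ 2 : MvPolynomial (Fin 3) ℝ)) = -2 ∧
      ¬ (∀ α : Fin 3 →₀ ℕ, 0 ≤ coeff α
          (aeval (fun i => ∑ j, C ((!![(1:ℝ), 0, 1/3; 0, 1, 1/3; 0, 0, 1/3] ^ m) i j) * X j)
            ((X 0 - X 1 + X 2) ^ 2 + (X 1) ^ 2 : MvPolynomial (Fin 3) ℝ))) :=
  stmt_15_general m
end
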